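/- arXiv:1611.01685 — 2 statements merged into one kernel-verified Lean document; each statement's English description precedes it below -/
import Mathlib

section
/- Let Λ be a lattice in ℝⁿ with minimal vector length m > 0, and let P be the union of the closed balls of radius m/2 centered at the points of Λ. Then P is a sphere packing, and the limit as r → ∞ of vol(B_r(0) ∩ P)/vol(B_r(0)) exists and equals vol(B^n_{m/2})/vol(ℝⁿ/Λ), where B^n_{m/2} is a ball of radius m/2 in ℝⁿ. -/
/-!
A set `S` invariant under a lattice `L` meets every translate of a bounded fundamental domain `F`
in the same measure `μ (S ∩ F)`. The tiles lying inside the ball `B_R` cover `B_{R-2d}` up to a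
null set when `F ⊆ B_d`, so `μ (S ∩ B_R) · μ F` is squeezed between the two values of
`μ (S ∩ F) · μ B_{R ∓ 2d}`, and `μ B_{R ± 2d} / μ B_R → 1`. For the lattice packing, balls of
radius `m / 2` around distinct lattice points meet only in a sphere, so `μ (S ∩ F)` is the volume
of one ball, while `μ F = |det b|`.
-/

open MeasureTheory Filter Metric Real Polynomial
open scoped FourierTransform InnerProductSpace

noncomputable section

/-- A sphere packing in `ℝⁿ`: a nonempty collection of closed balls of a fixed positive
radius with pairwise disjoint interiors, recorded by the set of centers and the radius. -/
structure SpherePacking (n : ℕ) where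
  centers : Set (EuclideanSpace ℝ (Fin n))
  radius : ℝ
  radius_pos : 0 < radius
  centers_nonempty : centers.Nonempty
  disjoint : centers.Pairwise fun x y => Disjoint (ball x radius) (ball y radius)

/-- The region of `ℝⁿ` covered by the balls of a sphere packing. -/
def SpherePacking.toSet {n : ℕ} (P : SpherePacking n) : Set (EuclideanSpace ℝ (Fin n)) :=
  ⋃ x ∈ P.centers, closedBall x P.radius

/-- The upper density of a sphere packing:
`limsup_{R → ∞} vol(B_R(0) ∩ P) / vol(B_R(0))`. -/
def SpherePacking.upperDensity {n : ℕ} (P : SpherePacking n) : ℝ :=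
  limsup (fun R : ℝ =>
    (volume (P.toSet ∩ closedBall 0 R)).toReal /
      (volume (closedBall (0 : EuclideanSpace ℝ (Fin n)) R)).toReal) atTop

/-- The sphere packing density of `ℝⁿ`: the supremum of the upper densities
of all sphere packings in `ℝⁿ`. -/
def spherePackingDensity (n : ℕ) : ℝ :=
  ⨆ P : SpherePacking n, P.upperDensity

open Topology Function
open scoped Pointwise

theorem tendsto_div_of_mul_le_of_le_mul {s v : ℝ → ℝ} {a c t : ℝ} (hc : 0 < c)
    (hv : ∀ᶠ R in atTop, 0 < v R)
    (hv_lim : ∀ u, Tendsto (fun R => v (R + u) / v R) atTop (𝓝 1))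
    (hlow : ∀ R, a * v (R - t) ≤ s R * c) (hup : ∀ R, s R * c ≤ a * v (R + t)) :
    Tendsto (fun R => s R / v R) atTop (𝓝 (a / c)) := by
  have hlim (u : ℝ) : Tendsto (fun R => a / c * (v (R + u) / v R)) atTop (𝓝 (a / c)) := by
    simpa using (hv_lim u).const_mul (a / c)
  refine tendsto_of_tendsto_of_tendsto_of_le_of_le' (hlim (-t)) (hlim t) ?_ ?_ <;>
    filter_upwards [hv] with R hR
  · rw [← sub_eq_add_neg, div_mul_div_comm, div_le_div_iff₀ (by positivity) hR]
    nlinarith [hlow R]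
  · rw [div_mul_div_comm, div_le_div_iff₀ hR (by positivity)]
    nlinarith [hup R]

theorem vadd_iUnion_vadd {G α : Type*} [AddGroup G] [AddAction G α] (A : Set α) (g : G) :
    g +ᵥ ⋃ h : G, h +ᵥ A = ⋃ h : G, h +ᵥ A := by
  simp_rw [Set.vadd_set_iUnion, vadd_vadd]
  exact (Equiv.addLeft g).surjective.iUnion_comp (fun h => h +ᵥ A)

section NormedGroup

variable {E : Type*} [NormedAddCommGroup E]

theorem AddSubgroup.vadd_closedBall_zero {L : AddSubgroup E} (g : L) (r : ℝ) :
    g +ᵥ closedBall (0 : E) r = closedBall (g : E) r :=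
  _root_.vadd_closedBall_zero r (g : E)

theorem AddSubgroup.biUnion_closedBall_eq_iUnion_vadd (L : AddSubgroup E) (r : ℝ) :
    ⋃ x ∈ (L : Set E), closedBall x r = ⋃ g : L, g +ᵥ closedBall (0 : E) r := by
  rw [Set.biUnion_eq_iUnion]
  exact Set.iUnion_congr fun g => (L.vadd_closedBall_zero g r).symm

theorem AddSubgroup.le_dist_of_mem_lowerBounds_norm {L : AddSubgroup E} {m : ℝ}
    (hm : m ∈ lowerBounds {r : ℝ | ∃ x ∈ L, x ≠ 0 ∧ ‖x‖ = r}) {x y : E} (hx : x ∈ L)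
    (hy : y ∈ L) (hxy : x ≠ y) : m ≤ dist x y :=
  hm ⟨x - y, L.sub_mem hx hy, sub_ne_zero.mpr hxy, (dist_eq_norm x y).symm⟩

def tilesWithin (L : AddSubgroup E) (F A : Set E) : Set E :=
  ⋃ g : {g : L // g +ᵥ F ⊆ A}, (g : L) +ᵥ F

variable {L : AddSubgroup E} {F : Set E}

theorem tilesWithin_subset (A : Set E) : tilesWithin L F A ⊆ A :=
  Set.iUnion_subset fun g => g.2

namespace MeasureTheory.IsAddFundamentalDomain

variable [MeasurableSpace E] {μ : Measure E}

theorem closedBall_sub_ae_le_tilesWithin (hF : IsAddFundamentalDomain L F μ) {d : ℝ}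
    (hd : F ⊆ closedBall 0 d) (R : ℝ) :
    closedBall (0 : E) (R - 2 * d) ≤ᵐ[μ] tilesWithin L F (closedBall 0 R) := by
  filter_upwards [hF.ae_covers] with y ⟨g, hgy⟩ hy
  have hgy_norm : ‖(g : E) + y‖ ≤ d := mem_closedBall_zero_iff.mp (hd hgy)
  have hy_norm : ‖y‖ ≤ R - 2 * d := mem_closedBall_zero_iff.mp hy
  have hg : -g +ᵥ F ⊆ closedBall 0 R := by
    rintro _ ⟨z, hz, rfl⟩
    have hz_norm : ‖z‖ ≤ d := mem_closedBall_zero_iff.mp (hd hz)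
    rw [mem_closedBall_zero_iff]
    change ‖-(g : E) + z‖ ≤ R
    calc ‖-(g : E) + z‖ ≤ ‖(g : E)‖ + ‖z‖ := by simpa using norm_add_le (-(g : E)) z
      _ ≤ (‖(g : E) + y‖ + ‖y‖) + ‖z‖ := by gcongr; simpa using norm_sub_le ((g : E) + y) y
      _ ≤ R := by linarith
  exact Set.mem_iUnion.mpr ⟨⟨-g, hg⟩, g +ᵥ y, hgy, neg_vadd_vadd g y⟩

variable [MeasurableAdd E] [μ.IsAddLeftInvariant] {S : Set E}

theorem measure_inter_iUnion_vadd (hF : IsAddFundamentalDomain L F μ)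
    (hS : ∀ g : L, g +ᵥ S = S) (hSm : NullMeasurableSet S μ) {ι : Type*} [Countable ι]
    {g : ι → L} (hg : Injective g) :
    μ (S ∩ ⋃ i, g i +ᵥ F) = ∑' _ : ι, μ (S ∩ F) := by
  rw [Set.inter_iUnion, measure_iUnion₀]
  · refine tsum_congr fun i => ?_
    rw [← hS (g i), ← Set.vadd_set_inter, measure_vadd, hS]
  · exact fun i j hij =>
      (hF.aedisjoint (hg.ne hij)).mono Set.inter_subset_right Set.inter_subset_right
  · exact fun i => hSm.inter (hF.nullMeasurableSet_vadd _)

/- Both sides are `(number of tiles) * μ (S ∩ F) * μ F`; cross-multiplying avoids dividing by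
a possibly infinite number of tiles. -/
theorem measure_inter_tilesWithin_mul [Countable L] (hF : IsAddFundamentalDomain L F μ)
    (hS : ∀ g : L, g +ᵥ S = S) (hSm : NullMeasurableSet S μ) (A : Set E) :
    μ (S ∩ tilesWithin L F A) * μ F = μ (S ∩ F) * μ (tilesWithin L F A) := by
  have htiles := hF.measure_inter_iUnion_vadd (S := Set.univ) (by simp) .univ
    (Subtype.val_injective (p := fun g : L => g +ᵥ F ⊆ A))
  simp only [Set.univ_inter] at htiles
  rw [tilesWithin, htiles, hF.measure_inter_iUnion_vadd hS hSm Subtype.val_injective,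
    ← ENNReal.tsum_mul_right, ← ENNReal.tsum_mul_left, mul_comm]

theorem measure_inter_mul_closedBall_sub_le [Countable L] (hF : IsAddFundamentalDomain L F μ)
    {d : ℝ} (hd : F ⊆ closedBall 0 d) (hS : ∀ g : L, g +ᵥ S = S) (hSm : NullMeasurableSet S μ)
    (R : ℝ) : μ (S ∩ F) * μ (closedBall 0 (R - 2 * d)) ≤ μ (S ∩ closedBall 0 R) * μ F :=
  calc
    _ ≤ μ (S ∩ F) * μ (tilesWithin L F (closedBall 0 R)) := by
      gcongr 1
      exact measure_mono_ae (hF.closedBall_sub_ae_le_tilesWithin hd R)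
    _ = μ (S ∩ tilesWithin L F (closedBall 0 R)) * μ F :=
      (hF.measure_inter_tilesWithin_mul hS hSm _).symm
    _ ≤ _ := by
      gcongr
      exact tilesWithin_subset _

theorem measure_inter_closedBall_mul_le [Countable L] (hF : IsAddFundamentalDomain L F μ)
    {d : ℝ} (hd : F ⊆ closedBall 0 d) (hS : ∀ g : L, g +ᵥ S = S) (hSm : NullMeasurableSet S μ)
    (R : ℝ) : μ (S ∩ closedBall 0 R) * μ F ≤ μ (S ∩ F) * μ (closedBall 0 (R + 2 * d)) :=
  calc
    _ ≤ μ (S ∩ tilesWithin L F (closedBall 0 (R + 2 * d))) * μ F := by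
      gcongr 1
      have hR := hF.closedBall_sub_ae_le_tilesWithin hd (R + 2 * d)
      rw [add_sub_cancel_right] at hR
      exact measure_mono_ae ((EventuallyLE.refl _ S).inter hR)
    _ = μ (S ∩ F) * μ (tilesWithin L F (closedBall 0 (R + 2 * d))) :=
      hF.measure_inter_tilesWithin_mul hS hSm _
    _ ≤ _ := by
      gcongr
      exact tilesWithin_subset _

theorem measure_iUnion_vadd_inter [Countable L] (hF : IsAddFundamentalDomain L F μ)
    {A : Set E} (hA : NullMeasurableSet A μ)
    (hdisj : Pairwise (AEDisjoint μ on fun g : L => g +ᵥ A)) :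
    μ ((⋃ g : L, g +ᵥ A) ∩ F) = μ A := by
  rw [hF.measure_eq_tsum A, Set.iUnion_inter, measure_iUnion₀]
  · exact fun g h hgh => (hdisj hgh).mono Set.inter_subset_left Set.inter_subset_left
  · exact fun g => (hA.vadd g).inter hF.nullMeasurableSet

end MeasureTheory.IsAddFundamentalDomain

variable [NormedSpace ℝ E] [FiniteDimensional ℝ E] [MeasurableSpace E] [BorelSpace E]
  (μ : Measure E) [μ.IsAddHaarMeasure]

theorem tendsto_measure_closedBall_add_div (t : ℝ) :
    Tendsto (fun R => (μ (closedBall (0 : E) (R + t))).toReal / (μ (closedBall (0 : E) R)).toReal)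
      atTop (𝓝 1) := by
  have hball (R : ℝ) (hR : 0 ≤ R) : (μ (closedBall (0 : E) R)).toReal =
      R ^ Module.finrank ℝ E * (μ (ball 0 1)).toReal := by
    rw [Measure.addHaar_closedBall μ _ hR, ENNReal.toReal_mul,
      ENNReal.toReal_ofReal (by positivity)]
  have hunit : 0 < (μ (ball (0 : E) 1)).toReal :=
    ENNReal.toReal_pos (measure_ball_pos μ _ one_pos).ne' measure_ball_lt_top.ne
  have hpow : Tendsto (fun R : ℝ => (1 + t * R⁻¹) ^ Module.finrank ℝ E) atTop (𝓝 1) := by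
    simpa using ((tendsto_inv_atTop_zero.const_mul t).const_add 1).pow (Module.finrank ℝ E)
  refine hpow.congr' ?_
  filter_upwards [eventually_gt_atTop 0, eventually_ge_atTop (-t)] with R hR hRt
  rw [hball _ (by linarith), hball _ hR.le, mul_div_mul_right _ _ hunit.ne', ← div_pow]
  congr 1
  field_simp

theorem pairwise_aedisjoint_closedBall [Nontrivial E] {ι : Type*} {c : ι → E} {r : ℝ}
    (h : Pairwise fun i j => 2 * r ≤ dist (c i) (c j)) :
    Pairwise (AEDisjoint μ on fun i : ι => closedBall (c i) r) := by
  intro i j hij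
  refine measure_mono_null (fun z ⟨hi, hj⟩ => ?_) (Measure.addHaar_sphere μ (c i) r)
  rw [mem_closedBall] at hi hj
  rw [mem_sphere]
  linarith [h hij, dist_triangle_left (c i) (c j) z]

variable {μ} in
theorem MeasureTheory.IsAddFundamentalDomain.tendsto_measure_inter_closedBall_div [Countable L]
    (hF : IsAddFundamentalDomain L F μ) (hFb : Bornology.IsBounded F) {S : Set E}
    (hS : ∀ g : L, g +ᵥ S = S) (hSm : NullMeasurableSet S μ) :
    Tendsto (fun R => (μ (S ∩ closedBall 0 R)).toReal / (μ (closedBall (0 : E) R)).toReal) atTop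
      (𝓝 ((μ (S ∩ F)).toReal / (μ F).toReal)) := by
  obtain ⟨d, hd⟩ := hFb.subset_closedBall 0
  have hF_top : μ F ≠ ⊤ := hFb.measure_lt_top.ne
  have hball_top (R : ℝ) : μ (closedBall (0 : E) R) ≠ ⊤ := measure_closedBall_lt_top.ne
  refine tendsto_div_of_mul_le_of_le_mul (t := 2 * d)
    (ENNReal.toReal_pos (hF.measure_ne_zero (NeZero.ne μ)) hF_top) ?_
    (tendsto_measure_closedBall_add_div μ) (fun R => ?_) (fun R => ?_)
  · filter_upwards [eventually_gt_atTop 0] with R hR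
    exact ENNReal.toReal_pos (measure_closedBall_pos μ 0 hR).ne' (hball_top R)
  · rw [← ENNReal.toReal_mul, ← ENNReal.toReal_mul]
    exact ENNReal.toReal_mono
      (ENNReal.mul_ne_top (measure_ne_top_of_subset Set.inter_subset_right (hball_top R)) hF_top)
      (hF.measure_inter_mul_closedBall_sub_le hd hS hSm R)
  · rw [← ENNReal.toReal_mul, ← ENNReal.toReal_mul]
    exact ENNReal.toReal_mono
      (ENNReal.mul_ne_top (measure_ne_top_of_subset Set.inter_subset_right hF_top) (hball_top _))
      (hF.measure_inter_closedBall_mul_le hd hS hSm R)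

end NormedGroup

theorem EuclideanSpace.volume_fundamentalDomain {ι : Type*} [Fintype ι] [DecidableEq ι]
    (b : Module.Basis ι ℝ (EuclideanSpace ℝ ι)) :
    volume (ZSpan.fundamentalDomain b) = ENNReal.ofReal |(Matrix.of fun i j => b i j).det| := by
  have hpi := ZSpan.volume_fundamentalDomain (b.map (WithLp.linearEquiv 2 ℝ (ι → ℝ)))
  rw [← ZSpan.map_fundamentalDomain] at hpi
  have hofLp := (EuclideanSpace.volume_preserving_symm_measurableEquiv_toLp ι).symm
    |>.measure_preimage_equiv (ZSpan.fundamentalDomain b)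
  rw [← MeasurableEquiv.image_symm] at hofLp
  exact hofLp.symm.trans hpi

theorem setOf_sum_intCast_smul_eq_span {ι E : Type*} [Fintype ι] [AddCommGroup E] [Module ℝ E]
    (b : ι → E) :
    {x | ∃ c : ι → ℤ, x = ∑ i, (c i : ℝ) • b i} = Submodule.span ℤ (Set.range b) := by
  ext x
  simp [Submodule.mem_span_range_iff_exists_fun, eq_comm, Int.cast_smul_eq_zsmul]

theorem lattice_packing_density_general (n : ℕ)
    (b : Fin n → EuclideanSpace ℝ (Fin n))
    (hb : LinearIndependent ℝ b) (hspan : Submodule.span ℝ (Set.range b) = ⊤)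
    (Λ : Set (EuclideanSpace ℝ (Fin n)))
    (hΛ : Λ = {x | ∃ c : Fin n → ℤ, x = ∑ i, (c i : ℝ) • b i})
    (m : ℝ)
    (hmin : IsLeast {r : ℝ | ∃ x ∈ Λ, x ≠ 0 ∧ ‖x‖ = r} m) :
    (∃ P : SpherePacking n, P.centers = Λ ∧ P.radius = m / 2) ∧
    Tendsto (fun R : ℝ =>
        (volume ((⋃ x ∈ Λ, closedBall x (m / 2)) ∩ closedBall 0 R)).toReal /
          (volume (closedBall (0 : EuclideanSpace ℝ (Fin n)) R)).toReal) atTop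
      (nhds ((volume (closedBall (0 : EuclideanSpace ℝ (Fin n)) (m / 2))).toReal /
        |Matrix.det (Matrix.of fun i j => b i j)|)) := by
  obtain ⟨⟨x₀, -, hx₀, hx₀m⟩, hmin_le⟩ := hmin
  have hm : 0 < m := hx₀m ▸ norm_pos_iff.mpr hx₀
  have : Nontrivial (EuclideanSpace ℝ (Fin n)) := ⟨⟨x₀, 0, hx₀⟩⟩
  let B := Module.Basis.mk hb hspan.ge
  have hB : ⇑B = b := Module.Basis.coe_mk _ _
  let L := (Submodule.span ℤ (Set.range B)).toAddSubgroup
  have : Countable L := inferInstanceAs (Countable (Submodule.span ℤ (Set.range B)))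
  obtain rfl : Λ = L := by rw [hΛ, setOf_sum_intCast_smul_eq_span, ← hB]; rfl
  have hsep (x y : EuclideanSpace ℝ (Fin n)) (hx : x ∈ L) (hy : y ∈ L) (hxy : x ≠ y) :
      2 * (m / 2) ≤ dist x y :=
    (mul_div_cancel₀ m two_ne_zero).trans_le (L.le_dist_of_mem_lowerBounds_norm hmin_le hx hy hxy)
  refine ⟨⟨⟨L, m / 2, half_pos hm, ⟨0, L.zero_mem⟩, fun x hx y hy hxy =>
    ball_disjoint_ball ((hsep x y hx hy hxy).trans_eq' (two_mul _))⟩, rfl, rfl⟩, ?_⟩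
  have hF := ZSpan.isAddFundamentalDomain' B volume
  have hdensity := hF.tendsto_measure_inter_closedBall_div (ZSpan.fundamentalDomain_isBounded B)
    (vadd_iUnion_vadd (closedBall 0 (m / 2)))
    (MeasurableSet.iUnion fun g => measurableSet_closedBall.const_vadd g).nullMeasurableSet
  have hdisj : Pairwise (AEDisjoint volume on
      fun g : L => g +ᵥ closedBall (0 : EuclideanSpace ℝ (Fin n)) (m / 2)) := by
    simp_rw [L.vadd_closedBall_zero]
    exact pairwise_aedisjoint_closedBall volume fun g h hgh =>
      hsep g h g.2 h.2 (Subtype.coe_injective.ne hgh)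
  rwa [hF.measure_iUnion_vadd_inter measurableSet_closedBall.nullMeasurableSet hdisj,
    ← L.biUnion_closedBall_eq_iUnion_vadd,
    EuclideanSpace.volume_fundamentalDomain, hB, ENNReal.toReal_ofReal (abs_nonneg _)] at hdensity

/-- Let `Λ` be a lattice in `ℝⁿ` (the integer linear combinations of a basis `b` of `ℝⁿ`)
with minimal vector length `m > 0`, and let `P` be the union of closed balls of radius
`m/2` centered at the points of `Λ`.  Then `P` is a sphere packing, and
`vol(B_R(0) ∩ P)/vol(B_R(0))` converges as `R → ∞` to `vol(Bⁿ_{m/2}) / vol(ℝⁿ/Λ)`,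
where `vol(ℝⁿ/Λ)` is the absolute value of the determinant of the basis matrix. -/
theorem lattice_packing_density (n : ℕ) (hn : 0 < n)
    (b : Fin n → EuclideanSpace ℝ (Fin n))
    (hb : LinearIndependent ℝ b) (hspan : Submodule.span ℝ (Set.range b) = ⊤)
    (Λ : Set (EuclideanSpace ℝ (Fin n)))
    (hΛ : Λ = {x | ∃ c : Fin n → ℤ, x = ∑ i, (c i : ℝ) • b i})
    (m : ℝ) (hm : 0 < m)
    (hmin : IsLeast {r : ℝ | ∃ x ∈ Λ, x ≠ 0 ∧ ‖x‖ = r} m) :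
    (∃ P : SpherePacking n, P.centers = Λ ∧ P.radius = m / 2) ∧
    Tendsto (fun R : ℝ =>
        (volume ((⋃ x ∈ Λ, closedBall x (m / 2)) ∩ closedBall 0 R)).toReal /
          (volume (closedBall (0 : EuclideanSpace ℝ (Fin n)) R)).toReal) atTop
      (nhds ((volume (closedBall (0 : EuclideanSpace ℝ (Fin n)) (m / 2))).toReal /
        |Matrix.det (Matrix.of fun i j => b i j)|)) :=
  lattice_packing_density_general n b hb hspan Λ hΛ m hmin
end
end

section
/- For every sphere packing P in ℝⁿ and every ε > 0 there exists a periodic sphere packing in ℝⁿ whose upper density is at least the upper density of P minus ε. Consequently, the supremum of the upper densities of periodic sphere packings equals the sphere packing density Δ_{ℝⁿ}. -/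
open MeasureTheory Filter Metric Real Polynomial
open scoped FourierTransform InnerProductSpace

noncomputable section

/-- A sphere packing is periodic if it is invariant under translation by every element
of some lattice (the integer span of a basis of `ℝⁿ`). -/
def SpherePacking.IsPeriodic {n : ℕ} (P : SpherePacking n) : Prop :=
  ∃ b : Fin n → EuclideanSpace ℝ (Fin n),
    LinearIndependent ℝ b ∧ Submodule.span ℝ (Set.range b) = ⊤ ∧
    ∀ c : Fin n → ℤ, ∀ x : EuclideanSpace ℝ (Fin n),
      x ∈ P.centers ↔ x + ∑ i, (c i : ℝ) • b i ∈ P.centers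

/-!
Cut `ℝⁿ` into cubes of side `a`. If every cube met the packing `P` in volume at most
`s · aⁿ`, then every large ball would too, up to a boundary layer of width `a√n`, and the upper
density of `P` would be at most `s`. So for `s` just below the density some cube contains
more than `s · aⁿ` of `P`. The balls of `P` meeting that cube have centres whose coordinates spread
over at most `a + 2r`; translating them by the lattice `(a + 4r)ℤⁿ` gives a periodic packing,
which has at least the density of one period cell, hence at least `s · (a / (a + 4r))ⁿ`.
This tends to `s` as `a → ∞`.
-/

open Function
open scoped ENNReal Topology

local notation "𝔼" n:max => EuclideanSpace ℝ (Fin n)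

theorem MeasureTheory.measure_biUnion_le_measure_biUnion {α ι : Type*} [MeasurableSpace α]
    [Countable ι] {μ ν : Measure α} {c : ι → Set α} (hc : ∀ i, MeasurableSet (c i))
    (hd : Pairwise (Disjoint on c)) (h : ∀ i, μ (c i) ≤ ν (c i)) (T : Set ι) :
    μ (⋃ i ∈ T, c i) ≤ ν (⋃ i ∈ T, c i) := by
  rw [measure_biUnion T.to_countable (hd.set_pairwise T) fun i _ => hc i,
    measure_biUnion T.to_countable (hd.set_pairwise T) fun i _ => hc i]
  exact ENNReal.tsum_le_tsum fun i => h i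

theorem tendsto_add_div_self_atTop (b : ℝ) : Tendsto (fun R : ℝ => (R + b) / R) atTop (𝓝 1) := by
  have : Tendsto (fun R : ℝ => 1 + b / R) atTop (𝓝 (1 + 0)) :=
    tendsto_const_nhds.add (tendsto_const_nhds.div_atTop tendsto_id)
  rw [add_zero] at this
  refine this.congr' ?_
  filter_upwards [eventually_ne_atTop 0] with R hR
  field_simp

namespace EuclideanSpace

variable {n : ℕ}

def cube (c : Fin n → ℝ) (a : ℝ) : Set (𝔼 n) := {x | ∀ i, x i ∈ Set.Ico (c i) (c i + a)}

theorem cube_eq_preimage (c : Fin n → ℝ) (a : ℝ) :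
    cube c a = (MeasurableEquiv.toLp 2 (Fin n → ℝ)).symm ⁻¹'
      Set.univ.pi fun i => Set.Ico (c i) (c i + a) := by
  ext x
  simp [cube]

theorem measurableSet_cube (c : Fin n → ℝ) (a : ℝ) : MeasurableSet (cube c a) := by
  rw [cube_eq_preimage]
  exact (MeasurableEquiv.measurable _) (MeasurableSet.univ_pi fun _ => measurableSet_Ico)

theorem volume_cube (c : Fin n → ℝ) {a : ℝ} (ha : 0 ≤ a) :
    volume (cube c a) = ENNReal.ofReal (a ^ n) := by
  rw [cube_eq_preimage, (volume_preserving_symm_measurableEquiv_toLp (Fin n)).measure_preimage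
    (MeasurableSet.univ_pi fun _ => measurableSet_Ico).nullMeasurableSet, volume_pi_pi]
  simp [Real.volume_Ico, ENNReal.ofReal_pow ha]

theorem dist_le_of_forall_abs_sub_le {x y : 𝔼 n} {a : ℝ} (ha : 0 ≤ a)
    (h : ∀ i, |x i - y i| ≤ a) : dist x y ≤ a * √n := by
  calc dist x y = √(∑ i, dist (x i) (y i) ^ 2) := EuclideanSpace.dist_eq x y
    _ ≤ √(∑ _i : Fin n, a ^ 2) := by
      gcongr with i
      exact (Real.dist_eq _ _).trans_le (h i)
    _ = a * √n := by simp [Real.sqrt_sq ha, mul_comm]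

theorem abs_sub_lt_of_mem_cube {c : Fin n → ℝ} {a : ℝ} {x y : 𝔼 n} (hx : x ∈ cube c a)
    (hy : y ∈ cube c a) (i : Fin n) : |x i - y i| < a := by
  obtain ⟨hx₁, hx₂⟩ := hx i
  obtain ⟨hy₁, hy₂⟩ := hy i
  rw [abs_lt]
  constructor <;> linarith

theorem dist_le_of_mem_cube {c : Fin n → ℝ} {a : ℝ} {x y : 𝔼 n} (ha : 0 ≤ a)
    (hx : x ∈ cube c a) (hy : y ∈ cube c a) : dist x y ≤ a * √n :=
  dist_le_of_forall_abs_sub_le ha fun i => (abs_sub_lt_of_mem_cube hx hy i).le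

def gridCell (o : Fin n → ℝ) (a : ℝ) (v : Fin n → ℤ) : Set (𝔼 n) :=
  cube (fun i => o i + a * v i) a

variable {o : Fin n → ℝ} {a : ℝ}

theorem measurableSet_gridCell (o : Fin n → ℝ) (a : ℝ) (v : Fin n → ℤ) :
    MeasurableSet (gridCell o a v) :=
  measurableSet_cube _ _

theorem volume_gridCell (o : Fin n → ℝ) (ha : 0 ≤ a) (v : Fin n → ℤ) :
    volume (gridCell o a v) = ENNReal.ofReal (a ^ n) :=
  volume_cube _ ha

theorem eq_floor_of_mem_gridCell (ha : 0 < a) {x : 𝔼 n} {v : Fin n → ℤ}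
    (hx : x ∈ gridCell o a v) : v = fun i => ⌊(x i - o i) / a⌋ := by
  funext i
  obtain ⟨h₁, h₂⟩ := hx i
  rw [eq_comm, Int.floor_eq_iff, le_div_iff₀ ha, div_lt_iff₀ ha]
  constructor <;> linarith

theorem mem_gridCell_floor (ha : 0 < a) (x : 𝔼 n) :
    x ∈ gridCell o a fun i => ⌊(x i - o i) / a⌋ := by
  intro i
  have h₁ := (le_div_iff₀ ha).1 (Int.floor_le ((x i - o i) / a))
  have h₂ := (div_lt_iff₀ ha).1 (Int.lt_floor_add_one ((x i - o i) / a))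
  constructor <;> linarith

theorem pairwise_disjoint_gridCell (ha : 0 < a) : Pairwise (Disjoint on gridCell (n := n) o a) :=
  fun _ _ hvw => Set.disjoint_left.2 fun _ hv hw =>
    hvw ((eq_floor_of_mem_gridCell ha hv).trans (eq_floor_of_mem_gridCell ha hw).symm)

theorem subset_biUnion_gridCell (ha : 0 < a) (S : Set (𝔼 n)) :
    S ⊆ ⋃ v ∈ {v | (gridCell o a v ∩ S).Nonempty}, gridCell o a v :=
  fun x hx => Set.mem_biUnion ⟨x, mem_gridCell_floor ha x, hx⟩ (mem_gridCell_floor ha x)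

theorem biUnion_gridCell_subset_closedBall (ha : 0 ≤ a) (x : 𝔼 n) (R : ℝ) :
    ⋃ v ∈ {v | (gridCell o a v ∩ closedBall x R).Nonempty}, gridCell o a v ⊆
      closedBall x (R + a * √n) :=
  Set.iUnion₂_subset fun _ ⟨z, hz, hzR⟩ y hy => by
    rw [mem_closedBall] at hzR ⊢
    linarith [dist_triangle y z x, dist_le_of_mem_cube ha hy hz]

def latticePoint (a : ℝ) (w : Fin n → ℤ) : 𝔼 n :=
  WithLp.toLp 2 fun i => a * w i

@[simp]
theorem latticePoint_apply (a : ℝ) (w : Fin n → ℤ) (i : Fin n) : latticePoint a w i = a * w i :=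
  rfl

theorem latticePoint_add (a : ℝ) (v w : Fin n → ℤ) :
    latticePoint a (v + w) = latticePoint a v + latticePoint a w := by
  ext i
  simp [mul_add]

@[simp]
theorem latticePoint_zero (a : ℝ) : latticePoint a (0 : Fin n → ℤ) = 0 := by
  ext i
  simp

theorem latticePoint_eq_sum (a : ℝ) (w : Fin n → ℤ) :
    latticePoint a w = ∑ i, (w i : ℝ) • (a • EuclideanSpace.basisFun (Fin n) ℝ i) := by
  ext j
  simp [Pi.single_apply, mul_comm]

theorem preimage_add_latticePoint_gridCell (v w : Fin n → ℤ) :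
    (· + latticePoint a w) ⁻¹' gridCell o a (v + w) = gridCell o a v := by
  ext x
  refine forall_congr' fun i => ?_
  simp only [PiLp.add_apply, latticePoint_apply, Pi.add_apply, Int.cast_add, Set.mem_Ico]
  constructor <;> rintro ⟨h₁, h₂⟩ <;> constructor <;> linarith

theorem volume_inter_gridCell_eq {K : Set (𝔼 n)}
    (hK : ∀ w, (· + latticePoint a w) ⁻¹' K = K) (v : Fin n → ℤ) :
    volume (K ∩ gridCell o a v) = volume (K ∩ gridCell o a 0) := by
  have hcell := preimage_add_latticePoint_gridCell (o := o) (a := a) 0 v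
  rw [zero_add] at hcell
  rw [← measure_preimage_add_right volume (latticePoint a v), Set.preimage_inter, hK v, hcell]

def periodize (A : ℝ) (C : Set (𝔼 n)) : Set (𝔼 n) :=
  {z | ∃ y ∈ C, ∃ w, y + latticePoint A w = z}

variable {A : ℝ} {C : Set (𝔼 n)}

theorem subset_periodize : C ⊆ periodize A C :=
  fun y hy => ⟨y, hy, 0, by simp⟩

theorem add_latticePoint_mem_periodize_iff {x : 𝔼 n} {w : Fin n → ℤ} :
    x + latticePoint A w ∈ periodize A C ↔ x ∈ periodize A C := by
  constructor
  · rintro ⟨y, hy, v, hv⟩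
    refine ⟨y, hy, v - w, add_right_cancel (b := latticePoint A w) ?_⟩
    rw [add_assoc, ← latticePoint_add, sub_add_cancel, hv]
  · rintro ⟨y, hy, v, rfl⟩
    exact ⟨y, hy, v + w, by rw [latticePoint_add, add_assoc]⟩

theorem pairwise_dist_periodize {r : ℝ} (hsep : C.Pairwise fun x y => 2 * r ≤ dist x y)
    (hdiam : ∀ x ∈ C, ∀ y ∈ C, ∀ i, |x i - y i| + 2 * r ≤ A) :
    (periodize A C).Pairwise fun x y => 2 * r ≤ dist x y := by
  rintro _ ⟨x, hx, v, rfl⟩ _ ⟨y, hy, w, rfl⟩ hne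
  obtain rfl | ⟨i, hi⟩ := (eq_or_ne v w).imp_right Function.ne_iff.1
  · rw [dist_add_right]
    exact hsep hx hy fun h => hne (by rw [h])
  have hvw : 1 ≤ |(v i : ℝ) - w i| := by exact_mod_cast Int.one_le_abs (sub_ne_zero.2 hi)
  calc 2 * r ≤ |A| * |(v i : ℝ) - w i| - |y i - x i| := by
        nlinarith [le_abs_self A, abs_nonneg A, hdiam x hx y hy i, abs_sub_comm (x i) (y i)]
    _ = |A * (v i - w i)| - |y i - x i| := by rw [abs_mul]
    _ ≤ |A * (v i - w i) - (y i - x i)| := abs_sub_abs_le_abs_sub _ _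
    _ = dist ((x + latticePoint A v) i) ((y + latticePoint A w) i) := by
        rw [Real.dist_eq]
        congr 1
        simp only [PiLp.add_apply, latticePoint_apply]
        ring
    _ ≤ dist (x + latticePoint A v) (y + latticePoint A w) := PiLp.dist_apply_le _ _ _

end EuclideanSpace

section BallDensity

open EuclideanSpace

variable {n : ℕ}

def ballDensity (K : Set (𝔼 n)) (R : ℝ) : ℝ :=
  volume.real (K ∩ closedBall 0 R) / volume.real (closedBall (0 : 𝔼 n) R)

theorem ballDensity_nonneg (K : Set (𝔼 n)) (R : ℝ) : 0 ≤ ballDensity K R := by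
  unfold ballDensity
  positivity

theorem ballDensity_le_one (K : Set (𝔼 n)) (R : ℝ) : ballDensity K R ≤ 1 :=
  div_le_one_of_le₀ (measureReal_mono Set.inter_subset_right measure_closedBall_lt_top.ne)
    measureReal_nonneg

theorem isBoundedUnder_le_ballDensity (K : Set (𝔼 n)) :
    IsBoundedUnder (· ≤ ·) atTop (ballDensity K) :=
  isBoundedUnder_of ⟨1, ballDensity_le_one K⟩

theorem isBoundedUnder_ge_ballDensity (K : Set (𝔼 n)) :
    IsBoundedUnder (· ≥ ·) atTop (ballDensity K) :=
  isBoundedUnder_of ⟨0, ballDensity_nonneg K⟩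

theorem measureReal_closedBall_pos {R : ℝ} (hR : 0 < R) :
    0 < volume.real (closedBall (0 : 𝔼 n) R) :=
  ENNReal.toReal_pos (measure_closedBall_pos _ _ hR).ne' measure_closedBall_lt_top.ne

theorem tendsto_measureReal_closedBall_add_div (b : ℝ) :
    Tendsto (fun R => volume.real (closedBall (0 : 𝔼 n) (R + b)) /
      volume.real (closedBall (0 : 𝔼 n) R)) atTop (𝓝 1) := by
  have hκ : 0 < volume.real (ball (0 : 𝔼 n) 1) :=
    ENNReal.toReal_pos (measure_ball_pos _ _ one_pos).ne' measure_ball_lt_top.ne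
  have hlim := (tendsto_add_div_self_atTop b).pow n
  rw [one_pow] at hlim
  refine hlim.congr' ?_
  filter_upwards [eventually_gt_atTop 0, eventually_ge_atTop (-b)] with R hR hRb
  rw [Measure.addHaar_real_closedBall _ _ hR.le,
    Measure.addHaar_real_closedBall _ _ (by linarith : 0 ≤ R + b), finrank_euclideanSpace_fin,
    mul_div_mul_right _ _ hκ.ne', div_pow]

variable {o : Fin n → ℝ} {a : ℝ} {K : Set (𝔼 n)}

theorem volume_inter_closedBall_le_of_gridCell (ha : 0 < a) {s : ℝ≥0∞}
    (h : ∀ v, volume (K ∩ gridCell o a v) ≤ s * volume (gridCell o a v)) (R : ℝ) :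
    volume (K ∩ closedBall 0 R) ≤ s * volume (closedBall (0 : 𝔼 n) (R + a * √n)) := by
  have hcell : ∀ v, volume.restrict K (gridCell o a v) ≤ (s • volume) (gridCell o a v) := by
    intro v
    rw [Measure.restrict_apply (measurableSet_gridCell o a v), Set.inter_comm]
    exact h v
  calc volume (K ∩ closedBall 0 R) = volume.restrict K (closedBall 0 R) := by
        rw [Measure.restrict_apply measurableSet_closedBall, Set.inter_comm]
    _ ≤ volume.restrict K
          (⋃ v ∈ {v | (gridCell o a v ∩ closedBall 0 R).Nonempty}, gridCell o a v) :=
        measure_mono (subset_biUnion_gridCell ha _)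
    _ ≤ (s • volume)
          (⋃ v ∈ {v | (gridCell o a v ∩ closedBall 0 R).Nonempty}, gridCell o a v) :=
        measure_biUnion_le_measure_biUnion (measurableSet_gridCell o a)
          (pairwise_disjoint_gridCell ha) hcell _
    _ ≤ s * volume (closedBall (0 : 𝔼 n) (R + a * √n)) := by
        rw [Measure.smul_apply, smul_eq_mul]
        gcongr
        exact biUnion_gridCell_subset_closedBall ha.le 0 R

theorem volume_closedBall_le_inter_of_gridCell (ha : 0 < a) {t : ℝ≥0∞}
    (h : ∀ v, t * volume (gridCell o a v) ≤ volume (K ∩ gridCell o a v)) (R : ℝ) :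
    t * volume (closedBall (0 : 𝔼 n) R) ≤ volume (K ∩ closedBall 0 (R + a * √n)) := by
  have hcell : ∀ v, (t • volume) (gridCell o a v) ≤ volume.restrict K (gridCell o a v) := by
    intro v
    rw [Measure.restrict_apply (measurableSet_gridCell o a v), Set.inter_comm]
    exact h v
  calc t * volume (closedBall (0 : 𝔼 n) R)
      ≤ (t • volume)
          (⋃ v ∈ {v | (gridCell o a v ∩ closedBall 0 R).Nonempty}, gridCell o a v) := by
        rw [Measure.smul_apply, smul_eq_mul]
        gcongr
        exact subset_biUnion_gridCell ha _
    _ ≤ volume.restrict K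
          (⋃ v ∈ {v | (gridCell o a v ∩ closedBall 0 R).Nonempty}, gridCell o a v) :=
        measure_biUnion_le_measure_biUnion (measurableSet_gridCell o a)
          (pairwise_disjoint_gridCell ha) hcell _
    _ ≤ volume.restrict K (closedBall 0 (R + a * √n)) :=
        measure_mono (biUnion_gridCell_subset_closedBall ha.le 0 R)
    _ = volume (K ∩ closedBall 0 (R + a * √n)) := by
        rw [Measure.restrict_apply measurableSet_closedBall, Set.inter_comm]

theorem limsup_ballDensity_le_of_gridCell (ha : 0 < a) {s : ℝ} (hs : 0 ≤ s)
    (h : ∀ v, volume (K ∩ gridCell o a v) ≤ ENNReal.ofReal s * volume (gridCell o a v)) :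
    limsup (ballDensity K) atTop ≤ s := by
  have hlim := (tendsto_measureReal_closedBall_add_div (n := n) (a * √n)).const_mul s
  rw [mul_one] at hlim
  rw [← hlim.limsup_eq]
  refine limsup_le_limsup ?_ (isBoundedUnder_ge_ballDensity K).isCoboundedUnder_le
    hlim.isBoundedUnder_le
  filter_upwards [eventually_gt_atTop 0] with R hR
  have hvol := ENNReal.toReal_mono
    (ENNReal.mul_ne_top ENNReal.ofReal_ne_top measure_closedBall_lt_top.ne)
    (volume_inter_closedBall_le_of_gridCell ha h R)
  rw [ENNReal.toReal_mul, ENNReal.toReal_ofReal hs] at hvol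
  rw [ballDensity, ← mul_div_assoc, div_le_div_iff_of_pos_right (measureReal_closedBall_pos hR)]
  exact hvol

theorem le_limsup_ballDensity_of_gridCell (ha : 0 < a) {t : ℝ} (ht : 0 ≤ t)
    (h : ∀ v, ENNReal.ofReal t * volume (gridCell o a v) ≤ volume (K ∩ gridCell o a v)) :
    t ≤ limsup (ballDensity K) atTop := by
  have hlim := (tendsto_measureReal_closedBall_add_div (n := n) (-(a * √n))).const_mul t
  rw [mul_one] at hlim
  rw [← hlim.limsup_eq]
  refine limsup_le_limsup ?_ hlim.isBoundedUnder_ge.isCoboundedUnder_le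
    (isBoundedUnder_le_ballDensity K)
  filter_upwards [eventually_gt_atTop 0] with R hR
  have hvol := ENNReal.toReal_mono
    (measure_mono Set.inter_subset_right |>.trans_lt measure_closedBall_lt_top).ne
    (volume_closedBall_le_inter_of_gridCell ha h (R + -(a * √n)))
  rw [ENNReal.toReal_mul, ENNReal.toReal_ofReal ht, neg_add_cancel_right] at hvol
  rw [ballDensity, ← mul_div_assoc, div_le_div_iff_of_pos_right (measureReal_closedBall_pos hR)]
  exact hvol

end BallDensity

namespace SpherePacking

open EuclideanSpace

variable {n : ℕ}

theorem upperDensity_eq_limsup_ballDensity (P : SpherePacking n) :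
    P.upperDensity = limsup (ballDensity P.toSet) atTop :=
  rfl

theorem upperDensity_nonneg (P : SpherePacking n) : 0 ≤ P.upperDensity :=
  le_limsup_of_frequently_le (Frequently.of_forall (ballDensity_nonneg _))
    (isBoundedUnder_le_ballDensity _)

theorem upperDensity_le_one (P : SpherePacking n) : P.upperDensity ≤ 1 :=
  limsup_le_of_le (isBoundedUnder_ge_ballDensity _).isCoboundedUnder_le
    (Eventually.of_forall (ballDensity_le_one _))

theorem two_mul_radius_le_dist (P : SpherePacking n) {x y : 𝔼 n} (hx : x ∈ P.centers)
    (hy : y ∈ P.centers) (hxy : x ≠ y) : 2 * P.radius ≤ dist x y := by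
  rw [two_mul, ← disjoint_ball_ball_iff P.radius_pos P.radius_pos]
  exact P.disjoint hx hy hxy

def ofSeparated (S : Set (𝔼 n)) {r : ℝ} (hr : 0 < r) (hS : S.Nonempty)
    (hsep : S.Pairwise fun x y => 2 * r ≤ dist x y) : SpherePacking n where
  centers := S
  radius := r
  radius_pos := hr
  centers_nonempty := hS
  disjoint _ hx _ hy hxy := (disjoint_ball_ball_iff hr hr).2 (by linarith [hsep hx hy hxy])

theorem preimage_add_toSet {P : SpherePacking n} {t : 𝔼 n}
    (h : ∀ x, x + t ∈ P.centers ↔ x ∈ P.centers) : (· + t) ⁻¹' P.toSet = P.toSet := by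
  ext z
  simp only [toSet, Set.mem_preimage, Set.mem_iUnion, mem_closedBall, exists_prop]
  constructor
  · rintro ⟨x, hx, hz⟩
    refine ⟨x - t, (h _).1 (by rwa [sub_add_cancel]), ?_⟩
    rwa [← dist_add_right z (x - t) t, sub_add_cancel]
  · rintro ⟨x, hx, hz⟩
    exact ⟨x + t, (h x).2 hx, by rwa [dist_add_right]⟩

theorem isPeriodic_of_add_latticePoint_mem_iff {P : SpherePacking n} {a : ℝ} (ha : a ≠ 0)
    (h : ∀ w x, x + latticePoint a w ∈ P.centers ↔ x ∈ P.centers) : P.IsPeriodic := by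
  let b := (EuclideanSpace.basisFun (Fin n) ℝ).toBasis.isUnitSMul fun _ => IsUnit.mk0 a ha
  refine ⟨b, b.linearIndependent, b.span_eq, fun w x => ?_⟩
  simp_rw [b, Module.Basis.isUnitSMul_apply, OrthonormalBasis.coe_toBasis, ← latticePoint_eq_sum]
  exact (h w x).symm

theorem exists_isPeriodic : ∃ Q : SpherePacking n, Q.IsPeriodic :=
  ⟨ofSeparated (periodize 2 {0}) one_pos ⟨0, subset_periodize rfl⟩
      (pairwise_dist_periodize (Set.pairwise_singleton _ _) (by simp)),
    isPeriodic_of_add_latticePoint_mem_iff two_ne_zero fun _ _ =>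
      add_latticePoint_mem_periodize_iff⟩

theorem exists_isPeriodic_mul_div_pow_le_upperDensity (P : SpherePacking n) (c : Fin n → ℝ)
    {a t : ℝ} (ha : 0 < a) (ht : 0 ≤ t)
    (h : ENNReal.ofReal t * volume (cube c a) < volume (P.toSet ∩ cube c a)) :
    ∃ Q : SpherePacking n, Q.IsPeriodic ∧ t * (a / (a + 4 * P.radius)) ^ n ≤ Q.upperDensity := by
  set r := P.radius
  set A := a + 4 * r
  have hA : 0 < A := by linarith [P.radius_pos]
  set C := {y ∈ P.centers | (closedBall y r ∩ cube c a).Nonempty}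
  have hcover : P.toSet ∩ cube c a ⊆ ⋃ y ∈ C, closedBall y r := by
    rintro z ⟨hz, hzc⟩
    obtain ⟨y, hy, hzy⟩ := Set.mem_iUnion₂.1 hz
    exact Set.mem_iUnion₂.2 ⟨y, ⟨hy, z, hzy, hzc⟩, hzy⟩
  have hdiam : ∀ x ∈ C, ∀ y ∈ C, ∀ i, |x i - y i| + 2 * r ≤ A := by
    rintro x ⟨-, x', hx', hx'c⟩ y ⟨-, y', hy', hy'c⟩ i
    have hx := (PiLp.dist_apply_le x' x i).trans (mem_closedBall.1 hx')
    have hy := (PiLp.dist_apply_le y' y i).trans (mem_closedBall.1 hy')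
    rw [Real.dist_eq] at hx hy
    linarith [abs_sub_le (x i) (x' i) (y i), abs_sub_le (x' i) (y' i) (y i),
      abs_sub_comm (x i) (x' i), abs_sub_lt_of_mem_cube hx'c hy'c i]
  obtain ⟨z, hz⟩ := nonempty_of_measure_ne_zero (pos_of_gt h).ne'
  obtain ⟨y, hy, -⟩ := Set.mem_iUnion₂.1 (hcover hz)
  let Q := ofSeparated (periodize A C) P.radius_pos ⟨y, subset_periodize hy⟩
    (pairwise_dist_periodize (fun x hx y hy hxy => P.two_mul_radius_le_dist hx.1 hy.1 hxy) hdiam)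
  have hinv : ∀ w x, x + latticePoint A w ∈ Q.centers ↔ x ∈ Q.centers :=
    fun _ _ => add_latticePoint_mem_periodize_iff
  refine ⟨Q, isPeriodic_of_add_latticePoint_mem_iff hA.ne' hinv, ?_⟩
  have hsub : P.toSet ∩ cube c a ⊆ Q.toSet ∩ gridCell (fun i => c i - r) A 0 := by
    refine fun z hz => ⟨Set.biUnion_mono subset_periodize (fun _ _ => subset_rfl) (hcover hz),
      fun i => ?_⟩
    obtain ⟨h₁, h₂⟩ := hz.2 i
    simp only [Pi.zero_apply, Int.cast_zero, mul_zero, add_zero, Set.mem_Ico]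
    constructor <;> linarith [P.radius_pos]
  rw [upperDensity_eq_limsup_ballDensity]
  refine le_limsup_ballDensity_of_gridCell (o := fun i => c i - r) hA (by positivity) fun v => ?_
  calc ENNReal.ofReal (t * (a / A) ^ n) * volume (gridCell (fun i => c i - r) A v)
      = ENNReal.ofReal t * volume (cube c a) := by
        rw [volume_gridCell _ hA.le, volume_cube _ ha.le, ← ENNReal.ofReal_mul (by positivity),
          ← ENNReal.ofReal_mul ht, div_pow, mul_assoc, div_mul_cancel₀ _ (by positivity)]
    _ ≤ volume (P.toSet ∩ cube c a) := h.le
    _ ≤ volume (Q.toSet ∩ gridCell (fun i => c i - r) A 0) := measure_mono hsub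
    _ = volume (Q.toSet ∩ gridCell (fun i => c i - r) A v) :=
        (volume_inter_gridCell_eq (fun w => preimage_add_toSet (hinv w)) v).symm

theorem exists_isPeriodic_sub_le_upperDensity (P : SpherePacking n) {ε : ℝ} (hε : 0 < ε) :
    ∃ Q : SpherePacking n, Q.IsPeriodic ∧ P.upperDensity - ε ≤ Q.upperDensity := by
  obtain hD | hD := le_or_gt P.upperDensity ε
  · obtain ⟨Q, hQ⟩ := exists_isPeriodic (n := n)
    exact ⟨Q, hQ, by linarith [Q.upperDensity_nonneg]⟩
  set s := P.upperDensity - ε / 2 with hs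
  have hlim : Tendsto (fun a => s * (a / (a + 4 * P.radius)) ^ n) atTop (𝓝 s) := by
    simpa using (((tendsto_add_div_self_atTop (4 * P.radius)).inv₀ one_ne_zero).pow n).const_mul s
  obtain ⟨a, ha, hsa⟩ := ((eventually_gt_atTop 0).and
    (hlim.eventually (lt_mem_nhds (by linarith : P.upperDensity - ε < s)))).exists
  obtain ⟨v, hv⟩ : ∃ v, ENNReal.ofReal s * volume (gridCell 0 a v) <
      volume (P.toSet ∩ gridCell 0 a v) := by
    by_contra! h
    have := limsup_ballDensity_le_of_gridCell ha (by linarith) h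
    rw [← upperDensity_eq_limsup_ballDensity] at this
    linarith
  obtain ⟨Q, hQ, hsQ⟩ := exists_isPeriodic_mul_div_pow_le_upperDensity P _ ha (by linarith) hv
  exact ⟨Q, hQ, hsa.le.trans hsQ⟩

end SpherePacking

theorem periodic_packings_attain_density_general (n : ℕ) :
    (∀ P : SpherePacking n, ∀ ε : ℝ, 0 < ε →
      ∃ Q : SpherePacking n, Q.IsPeriodic ∧ P.upperDensity - ε ≤ Q.upperDensity) ∧
    sSup {d : ℝ | ∃ Q : SpherePacking n, Q.IsPeriodic ∧ Q.upperDensity = d} =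
      spherePackingDensity n := by
  refine ⟨fun P ε hε => P.exists_isPeriodic_sub_le_upperDensity hε, ?_⟩
  obtain ⟨Q₀, hQ₀⟩ := SpherePacking.exists_isPeriodic (n := n)
  have : Nonempty (SpherePacking n) := ⟨Q₀⟩
  have hbdd : BddAbove {d : ℝ | ∃ Q : SpherePacking n, Q.IsPeriodic ∧ Q.upperDensity = d} :=
    ⟨1, fun _ ⟨Q, _, hQ⟩ => hQ ▸ Q.upperDensity_le_one⟩
  apply le_antisymm
  · exact csSup_le ⟨_, Q₀, hQ₀, rfl⟩ fun _ ⟨Q, _, hQ⟩ =>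
      hQ ▸ le_ciSup ⟨1, Set.forall_mem_range.2 SpherePacking.upperDensity_le_one⟩ Q
  · refine ciSup_le fun P => le_of_forall_pos_le_add fun ε hε => ?_
    obtain ⟨Q, hQ, hPQ⟩ := P.exists_isPeriodic_sub_le_upperDensity hε
    linarith [le_csSup hbdd ⟨Q, hQ, rfl⟩]

/-- For every sphere packing `P` in `ℝⁿ` and every `ε > 0` there exists a periodic sphere
packing whose upper density is at least the upper density of `P` minus `ε`; consequently,
the supremum of the upper densities of periodic sphere packings equals the sphere packing
density `Δ_{ℝⁿ}`. -/
theorem periodic_packings_attain_density (n : ℕ) (hn : 0 < n) :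
    (∀ P : SpherePacking n, ∀ ε : ℝ, 0 < ε →
      ∃ Q : SpherePacking n, Q.IsPeriodic ∧ P.upperDensity - ε ≤ Q.upperDensity) ∧
    sSup {d : ℝ | ∃ Q : SpherePacking n, Q.IsPeriodic ∧ Q.upperDensity = d} =
      spherePackingDensity n :=
  periodic_packings_attain_density_general n
end
end
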